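/- For every d×d unitary matrix V and every positive semidefinite d×d matrix ρ with trace ρ = 1, letting M = P · (I_d ⊗ₖ V) · (ρ ⊗ₖ (1/d) • I_d) · (I_d ⊗ₖ V)† · P†, one has tr₁(M) = (1/d) • I_d. (Secrecy of the zero-error private communication scheme: the environment's output is maximally mixed, independent of the data state ρ and of V.) -/
import Mathlib


open Matrix Kronecker ComplexOrder

/-- The controlled-phase gate P, diagonal with P[(i,j),(i,j)] = ω^{i·j}, ω = exp(2πi/d). -/
noncomputable def Pgate (d : ℕ) : Matrix (Fin d × Fin d) (Fin d × Fin d) ℂ :=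
  Matrix.diagonal fun p => Complex.exp (2 * Real.pi * Complex.I / d) ^ ((p.1 : ℕ) * (p.2 : ℕ))

/-- Partial trace over the first system: tr₁(M)[j,l] = Σ_i M[(i,j),(i,l)]. -/
noncomputable def ptrace1 (d : ℕ) (M : Matrix (Fin d × Fin d) (Fin d × Fin d) ℂ) :
    Matrix (Fin d) (Fin d) ℂ :=
  fun j l => ∑ i : Fin d, M (i, j) (i, l)

/-- Secrecy of the zero-error private scheme: the environment's output is maximally mixed,
independent of the data state ρ and of the unitary V. -/
theorem stmt_15 (d : ℕ) (hd : 2 ≤ d)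
    (V : Matrix (Fin d) (Fin d) ℂ) (hV : V ∈ Matrix.unitaryGroup (Fin d) ℂ)
    (ρ : Matrix (Fin d) (Fin d) ℂ) (hρ : ρ.PosSemidef) (htr : ρ.trace = 1) :
    ptrace1 d
      (Pgate d * ((1 : Matrix (Fin d) (Fin d) ℂ) ⊗ₖ V) *
        (ρ ⊗ₖ (((d : ℂ))⁻¹ • (1 : Matrix (Fin d) (Fin d) ℂ))) *
        ((1 : Matrix (Fin d) (Fin d) ℂ) ⊗ₖ V)ᴴ * (Pgate d)ᴴ) =
      ((d : ℂ))⁻¹ • (1 : Matrix (Fin d) (Fin d) ℂ) := by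
  have hVV : V * Vᴴ = 1 := (Matrix.mem_unitaryGroup_iff.mp hV)
  have key : Pgate d * ((1 : Matrix (Fin d) (Fin d) ℂ) ⊗ₖ V) *
        (ρ ⊗ₖ (((d : ℂ))⁻¹ • (1 : Matrix (Fin d) (Fin d) ℂ))) *
        ((1 : Matrix (Fin d) (Fin d) ℂ) ⊗ₖ V)ᴴ
      = Pgate d * (ρ ⊗ₖ (((d : ℂ))⁻¹ • (1 : Matrix (Fin d) (Fin d) ℂ))) := by
    have hct : ((1 : Matrix (Fin d) (Fin d) ℂ) ⊗ₖ V)ᴴ =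
        (1 : Matrix (Fin d) (Fin d) ℂ) ⊗ₖ Vᴴ := by
      ext p q
      by_cases h : p.1 = q.1 <;>
        simp [Matrix.conjTranspose_apply, Matrix.kroneckerMap_apply, Matrix.one_apply, h,
          eq_comm]
    rw [Matrix.mul_assoc, Matrix.mul_assoc, hct,
      ← Matrix.mul_kronecker_mul, ← Matrix.mul_kronecker_mul]
    simp [Matrix.smul_mul, Matrix.mul_smul, hVV]
  rw [key]
  ext j l
  have hω : ∀ k : ℕ, Complex.exp (2 * Real.pi * Complex.I / d) ^ k *
      (starRingEnd ℂ) (Complex.exp (2 * Real.pi * Complex.I / d) ^ k) = 1 := by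
    intro k
    rw [map_pow, ← Complex.exp_conj, ← mul_pow, ← Complex.exp_add]
    have : (starRingEnd ℂ) (2 * Real.pi * Complex.I / d) = -(2 * Real.pi * Complex.I / d) := by
      simp [map_div₀, Complex.conj_I, map_ofNat]; ring
    rw [this, add_neg_cancel, Complex.exp_zero, one_pow]
  simp only [ptrace1, Pgate, Matrix.diagonal_conjTranspose, Matrix.diagonal_mul,
    Matrix.mul_diagonal, Matrix.kroneckerMap_apply, Pi.star_apply]
  by_cases h : j = l
  · subst h
    simp only [Matrix.smul_apply, Matrix.one_apply_eq, smul_eq_mul, mul_one]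
    have hterm : ∀ x : Fin d,
        Complex.exp (2 * ↑Real.pi * Complex.I / ↑d) ^ ((x : ℕ) * (j : ℕ)) * (ρ x x * (↑d)⁻¹) *
          star (Complex.exp (2 * ↑Real.pi * Complex.I / ↑d) ^ ((x : ℕ) * (j : ℕ)))
        = ρ x x * (↑d)⁻¹ := by
      intro x
      rw [mul_right_comm]
      rw [show (star (Complex.exp (2 * ↑Real.pi * Complex.I / ↑d) ^ ((x : ℕ) * (j : ℕ))))
        = (starRingEnd ℂ) (Complex.exp (2 * ↑Real.pi * Complex.I / ↑d) ^ ((x : ℕ) * (j : ℕ)))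
        from rfl, hω, one_mul]
    rw [Finset.sum_congr rfl fun x _ => hterm x, ← Finset.sum_mul]
    have : ∑ x : Fin d, ρ x x = ρ.trace := by simp [Matrix.trace, Matrix.diag]
    rw [this, htr, one_mul]
  · simp [Matrix.one_apply, h]
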